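/- Let a_n := ∑_{k=0}^n (C(n,k))² (C(n+k,n))² be the Apéry numbers. Then the power series ∑_{n≥0} a_n x^n converges for every real x with |x| < 17 − 12√2; moreover, the function ξ : (0, 17 − 12√2) → ℝ defined by ξ(x) := x·(x² − 34x + 1)^{1/2}·∑_{n≥0} a_n x^n is three times differentiable and satisfies, for all x ∈ (0, 17 − 12√2), ξ'''(x) = 4 r(x) ξ'(x) + 2 r'(x) ξ(x), where r(x) := −(x⁴ − 44x³ + 1206x² − 44x + 1)/(4x²(x² − 34x + 1)²). -/

import Mathlib

open Finset Filter Set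

set_option maxHeartbeats 1000000

noncomputable section






/-- The Apéry numbers, as in the statement. -/
def ap : ℕ → ℝ := fun n =>
  ∑ k ∈ Finset.range (n + 1), (n.choose k : ℝ) ^ 2 * ((n + k).choose n : ℝ) ^ 2

lemma sqrt2_sq : (Real.sqrt 2) ^ 2 = 2 := Real.sq_sqrt (by norm_num)

lemma sqrt2_nonneg : (0:ℝ) ≤ Real.sqrt 2 := Real.sqrt_nonneg 2

lemma rho_pos : (0:ℝ) < 17 - 12 * Real.sqrt 2 := by
  nlinarith [sqrt2_sq, sqrt2_nonneg]

lemma K_pos : (0:ℝ) < 17 + 12 * Real.sqrt 2 := by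
  nlinarith [sqrt2_sq, sqrt2_nonneg]

lemma K_rho : (17 + 12 * Real.sqrt 2) * (17 - 12 * Real.sqrt 2) = 1 := by
  nlinarith [sqrt2_sq]

/-- single binomial term bound via binomial theorem -/
lemma choose_mul_pow_le (m k : ℕ) (s : ℝ) (hs : 0 < s) :
    (m.choose k : ℝ) * s ^ k ≤ (1 + s) ^ m := by
  rcases le_or_gt k m with h | h
  · have hexp : (s + 1) ^ m = ∑ i ∈ Finset.range (m + 1), s ^ i * 1 ^ (m - i) * (m.choose i : ℝ) :=
      add_pow s 1 m
    have hk : k ∈ Finset.range (m + 1) := Finset.mem_range.2 (Nat.lt_succ_of_le h)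
    have hsingle : s ^ k * 1 ^ (m - k) * (m.choose k : ℝ) ≤
        ∑ i ∈ Finset.range (m + 1), s ^ i * 1 ^ (m - i) * (m.choose i : ℝ) := by
      apply Finset.single_le_sum (fun i _ => by positivity) hk
    calc (m.choose k : ℝ) * s ^ k = s ^ k * 1 ^ (m - k) * (m.choose k : ℝ) := by ring
    _ ≤ (s + 1) ^ m := by rw [hexp]; exact hsingle
    _ = (1 + s) ^ m := by ring
  · simp [Nat.choose_eq_zero_of_lt h]
    positivity

/-- key product bound: C(n,k) C(n+k,k) ≤ (3+2√2)^n -/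
lemma choose_prod_le (n k : ℕ) :
    (n.choose k : ℝ) * ((n + k).choose k : ℝ) ≤ (3 + 2 * Real.sqrt 2) ^ n := by
  set s : ℝ := 1 + Real.sqrt 2 with hs
  set t : ℝ := Real.sqrt 2 / 2 with ht
  have hs0 : 0 < s := by positivity
  have ht0 : 0 < t := by positivity
  have h1 : (n.choose k : ℝ) * s ^ k ≤ (1 + s) ^ n := choose_mul_pow_le n k s hs0
  have h2 : ((n + k).choose k : ℝ) * t ^ k ≤ (1 + t) ^ (n + k) := choose_mul_pow_le (n + k) k t ht0
  have hst : s * t = 1 + t := by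
    rw [hs, ht]; nlinarith [sqrt2_sq]
  have hmul : ((n.choose k : ℝ) * s ^ k) * (((n + k).choose k : ℝ) * t ^ k) ≤
      (1 + s) ^ n * (1 + t) ^ (n + k) := by
    apply mul_le_mul h1 h2 (by positivity) (by positivity)
  have hrw : ((n.choose k : ℝ) * s ^ k) * (((n + k).choose k : ℝ) * t ^ k)
      = ((n.choose k : ℝ) * ((n + k).choose k : ℝ)) * (1 + t) ^ k := by
    rw [← hst]; rw [mul_pow s t k]; ring
  have hrw2 : (1 + s) ^ n * (1 + t) ^ (n + k) = ((1 + s) * (1 + t)) ^ n * (1 + t) ^ k := by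
    rw [pow_add, mul_pow]; ring
  rw [hrw, hrw2] at hmul
  have hcancel : (n.choose k : ℝ) * ((n + k).choose k : ℝ) ≤ ((1 + s) * (1 + t)) ^ n :=
    le_of_mul_le_mul_right hmul (by positivity)
  have : (1 + s) * (1 + t) = 3 + 2 * Real.sqrt 2 := by
    rw [hs, ht]; nlinarith [sqrt2_sq]
  rwa [this] at hcancel

lemma ap_nonneg (n : ℕ) : 0 ≤ ap n := by
  apply Finset.sum_nonneg; intro k _; positivity

lemma ap_le (n : ℕ) : ap n ≤ ((n:ℝ) + 1) * (17 + 12 * Real.sqrt 2) ^ n := by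
  have hterm : ∀ k ∈ Finset.range (n + 1),
      (n.choose k : ℝ) ^ 2 * ((n + k).choose n : ℝ) ^ 2 ≤ (17 + 12 * Real.sqrt 2) ^ n := by
    intro k _
    have hsymm : ((n + k).choose n : ℝ) = ((n + k).choose k : ℝ) := by
      norm_cast; exact Nat.choose_symm_add
    rw [hsymm]
    have h := choose_prod_le n k
    have h0 : (0:ℝ) ≤ (n.choose k : ℝ) * ((n + k).choose k : ℝ) := by positivity
    calc (n.choose k : ℝ) ^ 2 * ((n + k).choose k : ℝ) ^ 2
        = ((n.choose k : ℝ) * ((n + k).choose k : ℝ)) ^ 2 := by ring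
      _ ≤ ((3 + 2 * Real.sqrt 2) ^ n) ^ 2 := by
          apply pow_le_pow_left₀ h0 h
      _ = ((3 + 2 * Real.sqrt 2) ^ 2) ^ n := by rw [← pow_mul, ← pow_mul, Nat.mul_comm]
      _ = (17 + 12 * Real.sqrt 2) ^ n := by
          congr 1; nlinarith [sqrt2_sq]
  calc ap n ≤ ∑ _k ∈ Finset.range (n + 1), (17 + 12 * Real.sqrt 2) ^ n :=
        Finset.sum_le_sum hterm
    _ = ((n:ℝ) + 1) * (17 + 12 * Real.sqrt 2) ^ n := by
        rw [Finset.sum_const, Finset.card_range]; push_cast; ring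






lemma geom_poly (j : ℕ) {q : ℝ} (h0 : 0 ≤ q) (h1 : q < 1) :
    Summable fun n : ℕ => ((n:ℝ) + 1) ^ j * q ^ n := by
  rcases h0.eq_or_lt with h | h
  · apply summable_of_ne_finset_zero (s := {0})
    intro n hn
    simp only [Finset.mem_singleton] at hn
    rw [← h, zero_pow hn, mul_zero]
  · have base : Summable fun n : ℕ => (n:ℝ) ^ j * q ^ n := by
      have := summable_pow_mul_geometric_of_norm_lt_one (R := ℝ) j (r := q)
        (by rwa [Real.norm_eq_abs, abs_of_pos h])
      exact this
    have shifted : Summable fun n : ℕ => ((n + 1 : ℕ):ℝ) ^ j * q ^ (n + 1) :=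
      (summable_nat_add_iff 1).2 base
    have := shifted.mul_left q⁻¹
    apply this.congr
    intro n
    push_cast
    field_simp
    ring

lemma master_summable {c : ℕ → ℝ} (C : ℝ) (j : ℕ)
    (hc : ∀ n, |c n| ≤ C * ((n:ℝ) + 1) ^ j * (17 + 12 * Real.sqrt 2) ^ n)
    {t : ℝ} (ht : |t| < 17 - 12 * Real.sqrt 2) :
    Summable fun n : ℕ => c n * t ^ n := by
  set K : ℝ := 17 + 12 * Real.sqrt 2 with hK
  have hK0 : 0 < K := K_pos
  have hq0 : 0 ≤ K * |t| := by positivity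
  have hq1 : K * |t| < 1 := by
    have := (mul_lt_mul_iff_right₀ hK0).2 ht
    rwa [K_rho] at this
  apply Summable.of_abs
  refine Summable.of_nonneg_of_le (fun n => abs_nonneg _)
    (f := fun n : ℕ => C * (((n:ℝ) + 1) ^ j * (K * |t|) ^ n)) ?_ ((geom_poly j hq0 hq1).mul_left C)
  intro n
  have h1 : |c n * t ^ n| = |c n| * |t| ^ n := by
    rw [abs_mul, abs_pow]
  rw [h1]
  have h2 : |c n| * |t| ^ n ≤ (C * ((n:ℝ) + 1) ^ j * K ^ n) * |t| ^ n := by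
    apply mul_le_mul_of_nonneg_right (hc n) (by positivity)
  calc |c n| * |t| ^ n ≤ (C * ((n:ℝ) + 1) ^ j * K ^ n) * |t| ^ n := h2
    _ = C * (((n:ℝ) + 1) ^ j * (K * |t|) ^ n) := by rw [mul_pow]; ring

/-- Termwise differentiation of a power series with a convergence bound. -/
lemma hasDerivAt_tsum_pow {b : ℕ → ℝ} {R : ℝ} (hR : 0 < R)
    (hb : Summable fun n : ℕ => ((n:ℝ) + 1) * |b n| * R ^ n)
    {x : ℝ} (hx : |x| < R) :
    HasDerivAt (fun y : ℝ => ∑' n : ℕ, b n * y ^ n)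
      (∑' n : ℕ, ((n:ℝ) + 1) * b (n + 1) * x ^ n) x := by
  have husum : Summable (fun n : ℕ => (n:ℝ) * |b n| * R ^ n / R) := by
    apply Summable.div_const
    refine Summable.of_nonneg_of_le (fun n => by positivity) ?_ hb
    intro n
    have : (n:ℝ) ≤ (n:ℝ) + 1 := by linarith
    apply mul_le_mul_of_nonneg_right (mul_le_mul_of_nonneg_right this (abs_nonneg _))
      (by positivity)
  have hbound : ∀ (n : ℕ) (y : ℝ), y ∈ Set.Ioo (-R) R →
      ‖b n * ((n:ℝ) * y ^ (n - 1))‖ ≤ (n:ℝ) * |b n| * R ^ n / R := by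
    intro n y hy
    have hyR : |y| ≤ R := le_of_lt (abs_lt.2 ⟨hy.1, hy.2⟩)
    cases n with
    | zero => simp
    | succ m =>
      have h1 : ‖b (m+1) * (((m+1:ℕ):ℝ) * y ^ (m + 1 - 1))‖
          = |b (m+1)| * (((m:ℝ)+1) * |y| ^ m) := by
        rw [Real.norm_eq_abs, abs_mul, abs_mul, abs_pow]
        push_cast
        rw [abs_of_nonneg (by positivity : (0:ℝ) ≤ (m:ℝ)+1)]
      rw [h1]
      have hym : |y| ^ m ≤ R ^ m := pow_le_pow_left₀ (abs_nonneg y) hyR m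
      have h2 : ((m+1:ℕ):ℝ) * |b (m+1)| * R ^ (m+1) / R = |b (m+1)| * (((m:ℝ)+1) * R ^ m) := by
        push_cast
        field_simp
        ring
      rw [h2]
      apply mul_le_mul_of_nonneg_left _ (abs_nonneg _)
      exact mul_le_mul_of_nonneg_left hym (by positivity)
  have hderivsum : ∀ (N : ℕ) (y : ℝ), y ∈ Set.Ioo (-R) R →
      HasDerivAt (fun z : ℝ => ∑ n ∈ Finset.range N, b n * z ^ n)
        (∑ n ∈ Finset.range N, b n * ((n:ℝ) * y ^ (n - 1))) y := by
    intro N y _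
    apply HasDerivAt.fun_sum
    intro n _
    exact (hasDerivAt_pow n y).const_mul (b n)
  have hsummable_y : ∀ y : ℝ, y ∈ Set.Ioo (-R) R → Summable fun n => b n * y ^ n := by
    intro y hy
    have hyR : |y| ≤ R := le_of_lt (abs_lt.2 ⟨hy.1, hy.2⟩)
    apply Summable.of_abs
    refine Summable.of_nonneg_of_le (fun n => abs_nonneg _) ?_ hb
    intro n
    rw [abs_mul, abs_pow]
    calc |b n| * |y| ^ n ≤ |b n| * R ^ n :=
          mul_le_mul_of_nonneg_left (pow_le_pow_left₀ (abs_nonneg y) hyR n) (abs_nonneg _)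
      _ ≤ ((n:ℝ) + 1) * |b n| * R ^ n := by
          nlinarith [mul_nonneg (mul_nonneg (Nat.cast_nonneg (α := ℝ) n) (abs_nonneg (b n)))
            (le_of_lt (pow_pos hR n))]
  have hmem : x ∈ Set.Ioo (-R) R := ⟨by linarith [neg_abs_le x], by linarith [le_abs_self x]⟩
  have main : HasDerivAt (fun y : ℝ => ∑' n : ℕ, b n * y ^ n)
      (∑' n : ℕ, b n * ((n:ℝ) * x ^ (n - 1))) x := by
    apply hasDerivAt_of_tendstoUniformlyOn isOpen_Ioo
      (tendstoUniformlyOn_tsum_nat husum hbound) (Eventually.of_forall hderivsum) _ hmem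
    intro y hy
    exact (hsummable_y y hy).hasSum.tendsto_sum_nat
  have hsd : Summable fun n => b n * ((n:ℝ) * x ^ (n - 1)) := by
    apply Summable.of_norm
    exact Summable.of_nonneg_of_le (fun n => norm_nonneg _) (fun n => hbound n x hmem) husum
  have : (∑' n : ℕ, b n * ((n:ℝ) * x ^ (n - 1)))
      = ∑' n : ℕ, ((n:ℝ) + 1) * b (n + 1) * x ^ n := by
    rw [Summable.tsum_eq_zero_add hsd]
    simp only [Nat.cast_zero, zero_mul, mul_zero, zero_add]
    apply tsum_congr
    intro n
    push_cast
    ring_nf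
  rwa [this] at main







/-- summand -/
def Tm (m j : ℕ) : ℝ := (m.choose j : ℝ) ^ 2 * ((m + j).choose j : ℝ) ^ 2

/-- certificate -/
def Hf (n j : ℕ) : ℝ :=
  4 * (2 * (n:ℝ) + 3) * (2 * (j:ℝ) ^ 2 + (j:ℝ) - 1 - 4 * ((n:ℝ) + 1) * ((n:ℝ) + 2)) *
    ((n + 1).choose j : ℝ) ^ 2 * ((n + j + 1).choose j : ℝ) ^ 2

/-- absorption: (k+1) C(m+1,k+1) = (m+1) C(m,k) -/
lemma L1 (m k : ℕ) : ((k:ℝ) + 1) * ((m + 1).choose (k + 1) : ℝ)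
    = ((m:ℝ) + 1) * (m.choose k : ℝ) := by
  have h := Nat.add_one_mul_choose_eq m k
  have h2 : ((m + 1) * m.choose k : ℕ) = ((m + 1).choose (k + 1) * (k + 1) : ℕ) := by
    simpa [Nat.succ_eq_add_one] using h
  have := congrArg (fun t : ℕ => (t : ℝ)) h2
  push_cast at this
  linarith

/-- right shift: (k+1) C(m,k+1) = (m-k) C(m,k), real subtraction -/
lemma L2 (m k : ℕ) : ((k:ℝ) + 1) * (m.choose (k + 1) : ℝ)
    = ((m:ℝ) - (k:ℝ)) * (m.choose k : ℝ) := by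
  rcases le_or_gt k m with h | h
  · have hnat := Nat.choose_succ_right_eq m k
    have := congrArg (fun t : ℕ => (t : ℝ)) hnat
    push_cast [h] at this
    linarith
  · rw [Nat.choose_eq_zero_of_lt h, Nat.choose_eq_zero_of_lt (by omega)]
    simp

/-- top-up: (m+1-k) C(m+1,k) = (m+1) C(m,k), real subtraction -/
lemma L3 (m k : ℕ) : ((m:ℝ) + 1 - (k:ℝ)) * ((m + 1).choose k : ℝ)
    = ((m:ℝ) + 1) * (m.choose k : ℝ) := by
  cases k with
  | zero => simp
  | succ j =>
    have h1 := L1 m j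
    have h2 := L2 m j
    have hj : ((j:ℝ) + 1) ≠ 0 := by positivity
    apply mul_left_cancel₀ hj
    push_cast at h1 h2 ⊢
    linear_combination ((m:ℝ) - (j:ℝ)) * h1 - ((m:ℝ) + 1) * h2

lemma key0 (n : ℕ) :
    ((n:ℝ) + 2) ^ 3 * Tm (n + 2) 0
      - (34 * ((n:ℝ) + 1) ^ 3 + 51 * ((n:ℝ) + 1) ^ 2 + 27 * ((n:ℝ) + 1) + 5) * Tm (n + 1) 0
      + ((n:ℝ) + 1) ^ 3 * Tm n 0 = Hf n 0 := by
  simp [Tm, Hf]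
  ring

lemma key1 (n k : ℕ) :
    ((n:ℝ) + 2) ^ 3 * Tm (n + 2) (k + 1)
      - (34 * ((n:ℝ) + 1) ^ 3 + 51 * ((n:ℝ) + 1) ^ 2 + 27 * ((n:ℝ) + 1) + 5) * Tm (n + 1) (k + 1)
      + ((n:ℝ) + 1) ^ 3 * Tm n (k + 1) = Hf n (k + 1) - Hf n k := by
  have hk1 : ((k:ℝ) + 1) ≠ 0 := by positivity
  have hn1 : ((n:ℝ) + 1) ≠ 0 := by positivity
  have hn2 : ((n:ℝ) + 2) ≠ 0 := by positivity
  set A : ℝ := ((n + 1).choose k : ℝ) with hA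
  set B : ℝ := ((n + k + 1).choose k : ℝ) with hB
  have h1 := L1 (n + 1) k
  rw [show n + 1 + 1 = n + 2 from rfl] at h1
  push_cast at h1
  have e1 : ((n + 2).choose (k + 1) : ℝ) = ((n:ℝ) + 2) * A / ((k:ℝ) + 1) := by
    rw [eq_div_iff hk1, hA]; linarith
  have hC1 := L1 (n + k + 2) k
  rw [show n + k + 2 + 1 = n + k + 3 from rfl] at hC1
  push_cast at hC1
  have hC2 := L3 (n + k + 1) k
  rw [show n + k + 1 + 1 = n + k + 2 from rfl] at hC2
  push_cast at hC2
  have e2 : ((n + k + 3).choose (k + 1) : ℝ)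
      = ((n:ℝ) + (k:ℝ) + 3) * ((n:ℝ) + (k:ℝ) + 2) * B / (((k:ℝ) + 1) * ((n:ℝ) + 2)) := by
    rw [eq_div_iff (by positivity), hB]
    linear_combination ((n:ℝ) + 2) * hC1 + ((n:ℝ) + (k:ℝ) + 3) * hC2
  have h3 := L2 (n + 1) k
  push_cast at h3
  have e3 : ((n + 1).choose (k + 1) : ℝ) = ((n:ℝ) + 1 - (k:ℝ)) * A / ((k:ℝ) + 1) := by
    rw [eq_div_iff hk1, hA]; linarith
  have h4 := L1 (n + k + 1) k
  rw [show n + k + 1 + 1 = n + k + 2 from rfl] at h4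
  push_cast at h4
  have e4 : ((n + k + 2).choose (k + 1) : ℝ) = ((n:ℝ) + (k:ℝ) + 2) * B / ((k:ℝ) + 1) := by
    rw [eq_div_iff hk1, hB]; linarith
  have h5a := L2 n k
  push_cast at h5a
  have h5b := L3 n k
  push_cast at h5b
  have e5 : (n.choose (k + 1) : ℝ)
      = ((n:ℝ) - (k:ℝ)) * ((n:ℝ) + 1 - (k:ℝ)) * A / (((k:ℝ) + 1) * ((n:ℝ) + 1)) := by
    rw [eq_div_iff (by positivity), hA]
    linear_combination ((n:ℝ) + 1) * h5a - ((n:ℝ) - (k:ℝ)) * h5b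
  have h6a := L1 (n + k) k
  push_cast at h6a
  have h6b := L3 (n + k) k
  push_cast at h6b
  have e6 : ((n + k + 1).choose (k + 1) : ℝ) = ((n:ℝ) + 1) * B / ((k:ℝ) + 1) := by
    rw [eq_div_iff hk1, hB]
    linear_combination h6a - h6b
  unfold Tm Hf
  rw [show n + 2 + (k + 1) = n + k + 3 from by omega,
      show n + 1 + (k + 1) = n + k + 2 from by omega,
      show n + (k + 1) = n + k + 1 from by omega,
      show n + k + 1 + 1 = n + k + 2 from by omega]
  push_cast
  rw [e1, e2, e3, e4, e5, e6, ← hA, ← hB]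
  field_simp
  ring

lemma ap_eq_sum (m L : ℕ) (h : m + 1 ≤ L) : ap m = ∑ k ∈ Finset.range L, Tm m k := by
  have step1 : ap m = ∑ k ∈ Finset.range (m + 1), Tm m k := by
    apply Finset.sum_congr rfl
    intro k _
    unfold Tm
    congr 2
    exact_mod_cast congrArg (fun t : ℕ => (t:ℝ)) (Nat.choose_symm_add (a := m) (b := k))
  rw [step1]
  apply Finset.sum_subset (Finset.range_subset_range.2 h)
  intro k _ hk
  have : m < k := by simp only [Finset.mem_range] at hk; omega
  simp [Tm, Nat.choose_eq_zero_of_lt this]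

lemma apery_rec (n : ℕ) :
    ((n:ℝ) + 2) ^ 3 * ap (n + 2)
      = (34 * ((n:ℝ) + 1) ^ 3 + 51 * ((n:ℝ) + 1) ^ 2 + 27 * ((n:ℝ) + 1) + 5) * ap (n + 1)
        - ((n:ℝ) + 1) ^ 3 * ap n := by
  rw [ap_eq_sum (n + 2) (n + 4) (by omega), ap_eq_sum (n + 1) (n + 4) (by omega),
      ap_eq_sum n (n + 4) (by omega)]
  have hsum : ∑ k ∈ Finset.range (n + 4),
      (((n:ℝ) + 2) ^ 3 * Tm (n + 2) k
        - (34 * ((n:ℝ) + 1) ^ 3 + 51 * ((n:ℝ) + 1) ^ 2 + 27 * ((n:ℝ) + 1) + 5) * Tm (n + 1) k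
        + ((n:ℝ) + 1) ^ 3 * Tm n k) = Hf n (n + 3) := by
    rw [show n + 4 = (n + 3) + 1 from rfl, Finset.sum_range_succ']
    have hcong : ∀ k ∈ Finset.range (n + 3),
        (((n:ℝ) + 2) ^ 3 * Tm (n + 2) (k+1)
          - (34 * ((n:ℝ) + 1) ^ 3 + 51 * ((n:ℝ) + 1) ^ 2 + 27 * ((n:ℝ) + 1) + 5) * Tm (n + 1) (k+1)
          + ((n:ℝ) + 1) ^ 3 * Tm n (k+1)) = Hf n (k + 1) - Hf n k := fun k _ => key1 n k
    rw [Finset.sum_congr rfl hcong, Finset.sum_range_sub (f := Hf n), key0]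
    ring
  have hzero : Hf n (n + 3) = 0 := by
    have : n + 1 < n + 3 := by omega
    simp [Hf, Nat.choose_eq_zero_of_lt this]
  rw [hzero] at hsum
  rw [Finset.sum_add_distrib, Finset.sum_sub_distrib, ← Finset.mul_sum, ← Finset.mul_sum,
      ← Finset.mul_sum] at hsum
  linarith
















-- ======== Part E ========

def dd1 : ℕ → ℝ := fun n => ((n:ℝ) + 1) * ap (n + 1)
def dd2 : ℕ → ℝ := fun n => ((n:ℝ) + 1) * dd1 (n + 1)
def dd3 : ℕ → ℝ := fun n => ((n:ℝ) + 1) * dd2 (n + 1)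

def F0 (y : ℝ) : ℝ := ∑' n : ℕ, ap n * y ^ n
def F1 (y : ℝ) : ℝ := ∑' n : ℕ, dd1 n * y ^ n
def F2 (y : ℝ) : ℝ := ∑' n : ℕ, dd2 n * y ^ n
def F3 (y : ℝ) : ℝ := ∑' n : ℕ, dd3 n * y ^ n

lemma abs_ap_le (n : ℕ) : |ap n| ≤ ((n:ℝ) + 1) * (17 + 12 * Real.sqrt 2) ^ n := by
  rw [abs_of_nonneg (ap_nonneg n)]; exact ap_le n

lemma abs_cast_le (n : ℕ) : |(n:ℝ)| ≤ (n:ℝ) + 1 := by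
  rw [abs_of_nonneg (Nat.cast_nonneg n)]; linarith

lemma abs_cast_sub_one_le (n : ℕ) : |(n:ℝ) - 1| ≤ (n:ℝ) + 1 := by
  rw [abs_le]; constructor <;> [nlinarith [Nat.cast_nonneg (α := ℝ) n]; linarith]

lemma abs_cast_sub_two_le (n : ℕ) : |(n:ℝ) - 2| ≤ 2 * ((n:ℝ) + 1) := by
  rw [abs_le]; constructor <;> [nlinarith [Nat.cast_nonneg (α := ℝ) n]; nlinarith [Nat.cast_nonneg (α := ℝ) n]]

/-- generic shifted derivative coefficient bound -/
lemma shift_bound {c : ℕ → ℝ} {C : ℝ} {j : ℕ}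
    (h : ∀ n, |c n| ≤ C * ((n:ℝ) + 1) ^ j * (17 + 12 * Real.sqrt 2) ^ n) (n : ℕ) :
    |((n:ℝ) + 1) * c (n + 1)|
      ≤ (2 ^ j * (17 + 12 * Real.sqrt 2) * C) * ((n:ℝ) + 1) ^ (j + 1)
        * (17 + 12 * Real.sqrt 2) ^ n := by
  set K : ℝ := 17 + 12 * Real.sqrt 2 with hK
  have hK0 : (0:ℝ) < K := K_pos
  have h1 := h (n + 1)
  push_cast at h1
  have h2 : ((n:ℝ) + 1 + 1) ^ j ≤ (2 * ((n:ℝ) + 1)) ^ j := by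
    apply pow_le_pow_left₀ (by positivity) (by linarith)
  have hCnn : 0 ≤ C * ((n:ℝ) + 1 + 1) ^ j * K ^ (n+1) := le_trans (abs_nonneg _) h1
  have hC0 : 0 ≤ C := by
    by_contra hc0
    push_neg at hc0
    have hp : (0:ℝ) < ((n:ℝ)+1+1) ^ j * K ^ (n+1) := by positivity
    nlinarith [hp]
  rw [abs_mul, abs_of_nonneg (by positivity : (0:ℝ) ≤ (n:ℝ)+1)]
  calc ((n:ℝ) + 1) * |c (n + 1)| ≤ ((n:ℝ) + 1) * (C * ((n:ℝ)+1+1) ^ j * K ^ (n+1)) := by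
        apply mul_le_mul_of_nonneg_left h1 (by positivity)
    _ ≤ ((n:ℝ) + 1) * (C * (2 * ((n:ℝ)+1)) ^ j * K ^ (n+1)) := by
        apply mul_le_mul_of_nonneg_left _ (by positivity)
        apply mul_le_mul_of_nonneg_right _ (by positivity)
        exact mul_le_mul_of_nonneg_left h2 hC0
    _ = (2 ^ j * K * C) * ((n:ℝ) + 1) ^ (j + 1) * K ^ n := by
        rw [mul_pow, pow_succ]; ring

lemma abs_dd1_le (n : ℕ) : |dd1 n| ≤ (2 ^ 1 * (17 + 12 * Real.sqrt 2) * 1) * ((n:ℝ) + 1) ^ 2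
    * (17 + 12 * Real.sqrt 2) ^ n := by
  have := shift_bound (c := ap) (C := 1) (j := 1) (fun m => by simpa using abs_ap_le m) n
  simpa [dd1] using this

lemma abs_dd2_le (n : ℕ) : |dd2 n| ≤ (2 ^ 2 * (17 + 12 * Real.sqrt 2) ^ 2 * 2)
    * ((n:ℝ) + 1) ^ 3 * (17 + 12 * Real.sqrt 2) ^ n := by
  have := shift_bound (c := dd1) (C := 2 ^ 1 * (17 + 12 * Real.sqrt 2) * 1) (j := 2) abs_dd1_le n
  calc |dd2 n| = |((n:ℝ) + 1) * dd1 (n + 1)| := by rw [dd2]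
    _ ≤ (2 ^ 2 * (2 ^ 1 * (17 + 12 * Real.sqrt 2) * 1) * (17 + 12 * Real.sqrt 2))
        * ((n:ℝ) + 1) ^ 3 * (17 + 12 * Real.sqrt 2) ^ n := by
        convert this using 2 <;> ring
    _ = (2 ^ 2 * (17 + 12 * Real.sqrt 2) ^ 2 * 2) * ((n:ℝ) + 1) ^ 3
        * (17 + 12 * Real.sqrt 2) ^ n := by ring

lemma abs_dd3_le (n : ℕ) : |dd3 n| ≤ (2 ^ 3 * (17 + 12 * Real.sqrt 2) ^ 3 * 8)
    * ((n:ℝ) + 1) ^ 4 * (17 + 12 * Real.sqrt 2) ^ n := by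
  have := shift_bound (c := dd2) (C := 2 ^ 2 * (17 + 12 * Real.sqrt 2) ^ 2 * 2) (j := 3)
    abs_dd2_le n
  calc |dd3 n| = |((n:ℝ) + 1) * dd2 (n + 1)| := by rw [dd3]
    _ ≤ (2 ^ 3 * (2 ^ 2 * (17 + 12 * Real.sqrt 2) ^ 2 * 2) * (17 + 12 * Real.sqrt 2))
        * ((n:ℝ) + 1) ^ 4 * (17 + 12 * Real.sqrt 2) ^ n := by
        convert this using 2 <;> ring
    _ = (2 ^ 3 * (17 + 12 * Real.sqrt 2) ^ 3 * 8) * ((n:ℝ) + 1) ^ 4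
        * (17 + 12 * Real.sqrt 2) ^ n := by ring

/-- generic derivative of power series on the disc of radius 17-12√2 -/
lemma hasDeriv_general {b : ℕ → ℝ} {C : ℝ} {j : ℕ}
    (hball : ∀ n, |b n| ≤ C * ((n:ℝ) + 1) ^ j * (17 + 12 * Real.sqrt 2) ^ n)
    {x : ℝ} (hx : |x| < 17 - 12 * Real.sqrt 2) :
    HasDerivAt (fun y : ℝ => ∑' n : ℕ, b n * y ^ n)
      (∑' n : ℕ, ((n:ℝ) + 1) * b (n + 1) * x ^ n) x := by
  set R : ℝ := (|x| + (17 - 12 * Real.sqrt 2)) / 2 with hR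
  have hR0 : 0 < R := by
    have := abs_nonneg x
    have := rho_pos
    rw [hR]; linarith
  have hxR : |x| < R := by rw [hR]; linarith
  have hRrho : R < 17 - 12 * Real.sqrt 2 := by rw [hR]; linarith
  have hb : Summable fun n : ℕ => ((n:ℝ) + 1) * |b n| * R ^ n := by
    have hm : Summable fun n : ℕ => (((n:ℝ) + 1) * |b n|) * R ^ n := by
      apply master_summable C (j + 1) _ (t := R) (by rwa [abs_of_pos hR0])
      intro n
      rw [abs_of_nonneg (by positivity)]
      calc ((n:ℝ) + 1) * |b n| ≤ ((n:ℝ) + 1) * (C * ((n:ℝ) + 1) ^ j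
            * (17 + 12 * Real.sqrt 2) ^ n) := by
            apply mul_le_mul_of_nonneg_left (hball n) (by positivity)
        _ = C * ((n:ℝ) + 1) ^ (j + 1) * (17 + 12 * Real.sqrt 2) ^ n := by
            rw [pow_succ]; ring
    exact hm
  exact hasDerivAt_tsum_pow hR0 hb hxR

lemma hF0' {x : ℝ} (hx : |x| < 17 - 12 * Real.sqrt 2) : HasDerivAt F0 (F1 x) x := by
  have h := hasDeriv_general (b := ap) (C := 1) (j := 1)
    (fun n => by simpa using abs_ap_le n) hx
  exact h

lemma hF1' {x : ℝ} (hx : |x| < 17 - 12 * Real.sqrt 2) : HasDerivAt F1 (F2 x) x := by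
  have h := hasDeriv_general (b := dd1) (C := 2 ^ 1 * (17 + 12 * Real.sqrt 2) * 1) (j := 2)
    abs_dd1_le hx
  exact h

lemma hF2' {x : ℝ} (hx : |x| < 17 - 12 * Real.sqrt 2) : HasDerivAt F2 (F3 x) x := by
  have h := hasDeriv_general (b := dd2) (C := 2 ^ 2 * (17 + 12 * Real.sqrt 2) ^ 2 * 2) (j := 3)
    abs_dd2_le hx
  exact h

lemma ap0 : ap 0 = 1 := by norm_num [ap]

lemma ap1 : ap 1 = 5 := by
  norm_num [ap, Finset.sum_range_succ]

def w1 (x : ℝ) : ℕ → ℝ := fun n => match n with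
  | 0 => 0
  | m + 1 => (34 * (m:ℝ) ^ 3 + 51 * (m:ℝ) ^ 2 + 27 * (m:ℝ) + 5) * ap m * x ^ (m + 1)

def w2 (x : ℝ) : ℕ → ℝ := fun n => match n with
  | 0 => 0
  | 1 => 0
  | m + 2 => ((m:ℝ) + 1) ^ 3 * ap m * x ^ (m + 2)

lemma ode {x : ℝ} (hx0 : x ≠ 0) (hx : |x| < 17 - 12 * Real.sqrt 2) :
    x ^ 2 * (x ^ 2 - 34 * x + 1) * F3 x + (6 * x ^ 3 - 153 * x ^ 2 + 3 * x) * F2 x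
      + (7 * x ^ 2 - 112 * x + 1) * F1 x + (x - 5) * F0 x = 0 := by
  set K : ℝ := 17 + 12 * Real.sqrt 2 with hKdef
  -- summabilities
  have S0 : Summable fun n : ℕ => ap n * x ^ n :=
    master_summable 1 1 (fun n => by simpa using abs_ap_le n) hx
  have S1 : Summable fun n : ℕ => (n:ℝ) * ap n * x ^ n := by
    apply master_summable 1 2 _ hx
    intro n
    rw [abs_mul]
    calc |(n:ℝ)| * |ap n| ≤ ((n:ℝ) + 1) * (((n:ℝ) + 1) * K ^ n) :=
          mul_le_mul (abs_cast_le n) (abs_ap_le n) (abs_nonneg _) (by positivity)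
      _ = 1 * ((n:ℝ) + 1) ^ 2 * K ^ n := by ring
  have S2 : Summable fun n : ℕ => (n:ℝ) * ((n:ℝ) - 1) * ap n * x ^ n := by
    apply master_summable 1 3 _ hx
    intro n
    rw [abs_mul, abs_mul]
    calc |(n:ℝ)| * |(n:ℝ) - 1| * |ap n|
        ≤ (((n:ℝ) + 1) * ((n:ℝ) + 1)) * (((n:ℝ) + 1) * K ^ n) := by
          apply mul_le_mul (mul_le_mul (abs_cast_le n) (abs_cast_sub_one_le n)
            (abs_nonneg _) (by positivity)) (abs_ap_le n) (abs_nonneg _) (by positivity)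
      _ = 1 * ((n:ℝ) + 1) ^ 3 * K ^ n := by ring
  have S3 : Summable fun n : ℕ => (n:ℝ) * ((n:ℝ) - 1) * ((n:ℝ) - 2) * ap n * x ^ n := by
    apply master_summable 2 4 _ hx
    intro n
    rw [abs_mul, abs_mul, abs_mul]
    calc |(n:ℝ)| * |(n:ℝ) - 1| * |(n:ℝ) - 2| * |ap n|
        ≤ (((n:ℝ) + 1) * ((n:ℝ) + 1) * (2 * ((n:ℝ) + 1))) * (((n:ℝ) + 1) * K ^ n) := by
          apply mul_le_mul _ (abs_ap_le n) (abs_nonneg _) (by positivity)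
          apply mul_le_mul _ (abs_cast_sub_two_le n) (abs_nonneg _) (by positivity)
          exact mul_le_mul (abs_cast_le n) (abs_cast_sub_one_le n) (abs_nonneg _) (by positivity)
      _ = 2 * ((n:ℝ) + 1) ^ 4 * K ^ n := by ring
  have Su3 : Summable fun n : ℕ => (n:ℝ) ^ 3 * ap n * x ^ n := by
    apply master_summable 1 4 _ hx
    intro n
    rw [abs_mul, abs_pow]
    calc |(n:ℝ)| ^ 3 * |ap n| ≤ ((n:ℝ) + 1) ^ 3 * (((n:ℝ) + 1) * K ^ n) := by
          apply mul_le_mul (pow_le_pow_left₀ (abs_nonneg _) (abs_cast_le n) 3) (abs_ap_le n)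
            (abs_nonneg _) (by positivity)
      _ = 1 * ((n:ℝ) + 1) ^ 4 * K ^ n := by ring
  have SQ : Summable fun n : ℕ =>
      (34 * (n:ℝ) ^ 3 + 51 * (n:ℝ) ^ 2 + 27 * (n:ℝ) + 5) * ap n * x ^ n := by
    apply master_summable 117 4 _ hx
    intro n
    rw [abs_mul]
    have hq : |34 * (n:ℝ) ^ 3 + 51 * (n:ℝ) ^ 2 + 27 * (n:ℝ) + 5| ≤ 117 * ((n:ℝ) + 1) ^ 3 := by
      rw [abs_of_nonneg (by positivity)]
      nlinarith [Nat.cast_nonneg (α := ℝ) n, sq_nonneg ((n:ℝ)), pow_nonneg (Nat.cast_nonneg (α := ℝ) n) 3]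
    calc |34 * (n:ℝ) ^ 3 + 51 * (n:ℝ) ^ 2 + 27 * (n:ℝ) + 5| * |ap n|
        ≤ (117 * ((n:ℝ) + 1) ^ 3) * (((n:ℝ) + 1) * K ^ n) :=
          mul_le_mul hq (abs_ap_le n) (abs_nonneg _) (by positivity)
      _ = 117 * ((n:ℝ) + 1) ^ 4 * K ^ n := by ring
  have SP : Summable fun n : ℕ => ((n:ℝ) + 1) ^ 3 * ap n * x ^ n := by
    apply master_summable 1 4 _ hx
    intro n
    rw [abs_mul, abs_of_nonneg (by positivity : (0:ℝ) ≤ ((n:ℝ)+1)^3)]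
    calc ((n:ℝ) + 1) ^ 3 * |ap n| ≤ ((n:ℝ) + 1) ^ 3 * (((n:ℝ) + 1) * K ^ n) :=
          mul_le_mul_of_nonneg_left (abs_ap_le n) (by positivity)
      _ = 1 * ((n:ℝ) + 1) ^ 4 * K ^ n := by ring
  -- summability of the shifted sequences
  have hw1sum : Summable (w1 x) := by
    rw [← summable_nat_add_iff 1]
    apply Summable.congr (SQ.mul_right x)
    intro n
    show (34 * (n:ℝ) ^ 3 + 51 * (n:ℝ) ^ 2 + 27 * (n:ℝ) + 5) * ap n * x ^ n * x = _
    rw [show w1 x (n + 1) = (34 * (n:ℝ) ^ 3 + 51 * (n:ℝ) ^ 2 + 27 * (n:ℝ) + 5) * ap n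
      * x ^ (n + 1) from rfl, pow_succ]
    ring
  have hw2sum : Summable (w2 x) := by
    rw [← summable_nat_add_iff 2]
    apply Summable.congr (SP.mul_right (x ^ 2))
    intro n
    show ((n:ℝ) + 1) ^ 3 * ap n * x ^ n * x ^ 2 = _
    rw [show w2 x (n + 2) = ((n:ℝ) + 1) ^ 3 * ap n * x ^ (n + 2) from rfl, pow_add]
    ring
  -- pointwise vanishing
  have hcombo : ∀ n : ℕ, (n:ℝ) ^ 3 * ap n * x ^ n - w1 x n + w2 x n = 0 := by
    intro n
    match n with
    | 0 => show (0:ℕ) ^ 3 * ap 0 * x ^ 0 - 0 + 0 = 0; simp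
    | 1 =>
      show ((1:ℕ):ℝ) ^ 3 * ap 1 * x ^ 1 - (34 * ((0:ℕ):ℝ) ^ 3 + 51 * ((0:ℕ):ℝ) ^ 2
        + 27 * ((0:ℕ):ℝ) + 5) * ap 0 * x ^ (0 + 1) + 0 = 0
      rw [ap0, ap1]; norm_num
    | (m + 2) =>
      show ((m + 2 : ℕ):ℝ) ^ 3 * ap (m + 2) * x ^ (m + 2)
        - (34 * ((m + 1 : ℕ):ℝ) ^ 3 + 51 * ((m + 1 : ℕ):ℝ) ^ 2 + 27 * ((m + 1 : ℕ):ℝ) + 5)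
          * ap (m + 1) * x ^ (m + 1 + 1)
        + ((m:ℝ) + 1) ^ 3 * ap m * x ^ (m + 2) = 0
      have h := apery_rec m
      push_cast
      linear_combination x ^ (m + 2) * h
  have hzero : ∑' n : ℕ, ((n:ℝ) ^ 3 * ap n * x ^ n - w1 x n + w2 x n) = 0 := by
    have : (fun n : ℕ => (n:ℝ) ^ 3 * ap n * x ^ n - w1 x n + w2 x n) = fun _ => 0 :=
      funext hcombo
    rw [this, tsum_zero]
  rw [Summable.tsum_add (Su3.sub hw1sum) hw2sum, Summable.tsum_sub Su3 hw1sum] at hzero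
  -- split falling factorials
  have hsplit3 : ∑' n : ℕ, (n:ℝ) ^ 3 * ap n * x ^ n
      = (∑' n : ℕ, (n:ℝ) * ((n:ℝ) - 1) * ((n:ℝ) - 2) * ap n * x ^ n)
        + 3 * (∑' n : ℕ, (n:ℝ) * ((n:ℝ) - 1) * ap n * x ^ n)
        + (∑' n : ℕ, (n:ℝ) * ap n * x ^ n) := by
    rw [← tsum_mul_left, ← Summable.tsum_add S3 (S2.mul_left 3),
        ← Summable.tsum_add (S3.add (S2.mul_left 3)) S1]
    apply tsum_congr; intro n; ring
  have hsplitQ : ∑' n : ℕ, (34 * (n:ℝ) ^ 3 + 51 * (n:ℝ) ^ 2 + 27 * (n:ℝ) + 5) * ap n * x ^ n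
      = 34 * (∑' n : ℕ, (n:ℝ) * ((n:ℝ) - 1) * ((n:ℝ) - 2) * ap n * x ^ n)
        + 153 * (∑' n : ℕ, (n:ℝ) * ((n:ℝ) - 1) * ap n * x ^ n)
        + 112 * (∑' n : ℕ, (n:ℝ) * ap n * x ^ n) + 5 * F0 x := by
    rw [F0, ← tsum_mul_left, ← tsum_mul_left, ← tsum_mul_left, ← tsum_mul_left,
        ← Summable.tsum_add (S3.mul_left 34) (S2.mul_left 153),
        ← Summable.tsum_add ((S3.mul_left 34).add (S2.mul_left 153)) (S1.mul_left 112),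
        ← Summable.tsum_add (((S3.mul_left 34).add (S2.mul_left 153)).add (S1.mul_left 112))
          (S0.mul_left 5)]
    apply tsum_congr; intro n; ring
  have hsplitP : ∑' n : ℕ, ((n:ℝ) + 1) ^ 3 * ap n * x ^ n
      = (∑' n : ℕ, (n:ℝ) * ((n:ℝ) - 1) * ((n:ℝ) - 2) * ap n * x ^ n)
        + 6 * (∑' n : ℕ, (n:ℝ) * ((n:ℝ) - 1) * ap n * x ^ n)
        + 7 * (∑' n : ℕ, (n:ℝ) * ap n * x ^ n) + F0 x := by
    rw [F0, ← tsum_mul_left, ← tsum_mul_left,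
        ← Summable.tsum_add S3 (S2.mul_left 6),
        ← Summable.tsum_add (S3.add (S2.mul_left 6)) (S1.mul_left 7),
        ← Summable.tsum_add ((S3.add (S2.mul_left 6)).add (S1.mul_left 7)) S0]
    apply tsum_congr; intro n; ring
  -- shifts to F's
  have hD1 : ∑' n : ℕ, (n:ℝ) * ap n * x ^ n = x * F1 x := by
    rw [Summable.tsum_eq_zero_add S1]
    have h0 : ((0:ℕ):ℝ) * ap 0 * x ^ 0 = 0 := by simp
    rw [h0, zero_add]
    have : ∀ n : ℕ, ((n + 1 : ℕ):ℝ) * ap (n + 1) * x ^ (n + 1) = x * (dd1 n * x ^ n) := by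
      intro n
      rw [dd1, pow_succ]
      push_cast
      ring
    rw [tsum_congr this, tsum_mul_left, F1]
  have hD2 : ∑' n : ℕ, (n:ℝ) * ((n:ℝ) - 1) * ap n * x ^ n = x ^ 2 * F2 x := by
    have s1 : Summable fun n : ℕ =>
        ((n + 1 : ℕ):ℝ) * (((n + 1 : ℕ):ℝ) - 1) * ap (n + 1) * x ^ (n + 1) :=
      (summable_nat_add_iff 1).2 S2
    rw [Summable.tsum_eq_zero_add S2]
    have h0 : ((0:ℕ):ℝ) * (((0:ℕ):ℝ) - 1) * ap 0 * x ^ 0 = 0 := by simp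
    rw [h0, zero_add, Summable.tsum_eq_zero_add s1]
    have h1 : ((0 + 1 : ℕ):ℝ) * (((0 + 1 : ℕ):ℝ) - 1) * ap (0 + 1) * x ^ (0 + 1) = 0 := by
      norm_num
    rw [h1, zero_add]
    have : ∀ n : ℕ, ((n + 1 + 1 : ℕ):ℝ) * (((n + 1 + 1 : ℕ):ℝ) - 1) * ap (n + 1 + 1)
        * x ^ (n + 1 + 1) = x ^ 2 * (dd2 n * x ^ n) := by
      intro n
      rw [show n + 1 + 1 = n + 2 from rfl, dd2, dd1, pow_add]
      push_cast
      ring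
    rw [tsum_congr this, tsum_mul_left, F2]
  have hD3 : ∑' n : ℕ, (n:ℝ) * ((n:ℝ) - 1) * ((n:ℝ) - 2) * ap n * x ^ n = x ^ 3 * F3 x := by
    have s1 : Summable fun n : ℕ => ((n + 1 : ℕ):ℝ) * (((n + 1 : ℕ):ℝ) - 1)
        * (((n + 1 : ℕ):ℝ) - 2) * ap (n + 1) * x ^ (n + 1) :=
      (summable_nat_add_iff 1).2 S3
    have s2 : Summable fun n : ℕ => ((n + 1 + 1 : ℕ):ℝ) * (((n + 1 + 1 : ℕ):ℝ) - 1)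
        * (((n + 1 + 1 : ℕ):ℝ) - 2) * ap (n + 1 + 1) * x ^ (n + 1 + 1) :=
      (summable_nat_add_iff 1).2 s1
    rw [Summable.tsum_eq_zero_add S3]
    have h0 : ((0:ℕ):ℝ) * (((0:ℕ):ℝ) - 1) * (((0:ℕ):ℝ) - 2) * ap 0 * x ^ 0 = 0 := by simp
    rw [h0, zero_add, Summable.tsum_eq_zero_add s1]
    have h1 : ((0 + 1 : ℕ):ℝ) * (((0 + 1 : ℕ):ℝ) - 1) * (((0 + 1 : ℕ):ℝ) - 2) * ap (0 + 1)
        * x ^ (0 + 1) = 0 := by norm_num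
    rw [h1, zero_add, Summable.tsum_eq_zero_add s2]
    have h2 : ((0 + 1 + 1 : ℕ):ℝ) * (((0 + 1 + 1 : ℕ):ℝ) - 1) * (((0 + 1 + 1 : ℕ):ℝ) - 2)
        * ap (0 + 1 + 1) * x ^ (0 + 1 + 1) = 0 := by norm_num
    rw [h2, zero_add]
    have : ∀ n : ℕ, ((n + 1 + 1 + 1 : ℕ):ℝ) * (((n + 1 + 1 + 1 : ℕ):ℝ) - 1)
        * (((n + 1 + 1 + 1 : ℕ):ℝ) - 2) * ap (n + 1 + 1 + 1) * x ^ (n + 1 + 1 + 1)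
        = x ^ 3 * (dd3 n * x ^ n) := by
      intro n
      rw [show n + 1 + 1 + 1 = n + 3 from rfl, dd3, dd2, dd1, pow_add]
      push_cast
      ring
    rw [tsum_congr this, tsum_mul_left, F3]
  -- expand the sums of w1, w2
  have hw1 : ∑' n : ℕ, w1 x n
      = x * (34 * (x ^ 3 * F3 x) + 153 * (x ^ 2 * F2 x) + 112 * (x * F1 x) + 5 * F0 x) := by
    rw [Summable.tsum_eq_zero_add hw1sum]
    have h0 : w1 x 0 = 0 := rfl
    rw [h0, zero_add]
    have : ∀ n : ℕ, w1 x (n + 1)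
        = x * ((34 * (n:ℝ) ^ 3 + 51 * (n:ℝ) ^ 2 + 27 * (n:ℝ) + 5) * ap n * x ^ n) := by
      intro n
      rw [show w1 x (n + 1) = (34 * (n:ℝ) ^ 3 + 51 * (n:ℝ) ^ 2 + 27 * (n:ℝ) + 5) * ap n
        * x ^ (n + 1) from rfl, pow_succ]
      ring
    rw [tsum_congr this, tsum_mul_left, hsplitQ, hD1, hD2, hD3]
  have hw2 : ∑' n : ℕ, w2 x n
      = x ^ 2 * ((x ^ 3 * F3 x) + 6 * (x ^ 2 * F2 x) + 7 * (x * F1 x) + F0 x) := by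
    have s1 : Summable fun n : ℕ => w2 x (n + 1) := (summable_nat_add_iff 1).2 hw2sum
    rw [Summable.tsum_eq_zero_add hw2sum]
    have h0 : w2 x 0 = 0 := rfl
    rw [h0, zero_add, Summable.tsum_eq_zero_add s1]
    have h1 : w2 x (0 + 1) = 0 := rfl
    rw [h1, zero_add]
    have : ∀ n : ℕ, w2 x (n + 1 + 1)
        = x ^ 2 * (((n:ℝ) + 1) ^ 3 * ap n * x ^ n) := by
      intro n
      rw [show w2 x (n + 1 + 1) = ((n:ℝ) + 1) ^ 3 * ap n * x ^ (n + 2) from rfl, pow_add]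
      ring
    rw [tsum_congr this, tsum_mul_left, hsplitP, hD1, hD2, hD3]
  rw [hsplit3, hD1, hD2, hD3, hw1, hw2] at hzero
  -- conclude
  apply mul_left_cancel₀ hx0
  rw [mul_zero]
  linear_combination hzero



















-- ======== Part F ========

def sqf (y : ℝ) : ℝ := Real.sqrt (y ^ 2 - 34 * y + 1)

def X1f (y : ℝ) : ℝ :=
  (y ^ 2 * F0 y + y * (sqf y) ^ 2 * F1 y - 17 * y * F0 y + (sqf y) ^ 2 * F0 y) / sqf y

def X2f (y : ℝ) : ℝ :=
  (-(y ^ 3 * F0 y) + 2 * y ^ 2 * (sqf y) ^ 2 * F1 y + 34 * y ^ 2 * F0 y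
    + y * ((sqf y) ^ 2) ^ 2 * F2 y + 3 * y * (sqf y) ^ 2 * F0 y - 34 * y * (sqf y) ^ 2 * F1 y
    - 289 * y * F0 y + 2 * ((sqf y) ^ 2) ^ 2 * F1 y - 34 * (sqf y) ^ 2 * F0 y)
  / (sqf y * (sqf y) ^ 2)

def X3f (y : ℝ) : ℝ :=
  (3 * y ^ 4 * F0 y - 3 * y ^ 3 * (sqf y) ^ 2 * F1 y - 153 * y ^ 3 * F0 y
    + 3 * y ^ 2 * ((sqf y) ^ 2) ^ 2 * F2 y - 6 * y ^ 2 * (sqf y) ^ 2 * F0 y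
    + 102 * y ^ 2 * (sqf y) ^ 2 * F1 y + 2601 * y ^ 2 * F0 y + y * ((sqf y) ^ 2) ^ 3 * F3 y
    + 9 * y * ((sqf y) ^ 2) ^ 2 * F1 y - 51 * y * ((sqf y) ^ 2) ^ 2 * F2 y
    + 153 * y * (sqf y) ^ 2 * F0 y - 867 * y * (sqf y) ^ 2 * F1 y - 14739 * y * F0 y
    + 3 * ((sqf y) ^ 2) ^ 3 * F2 y + 3 * ((sqf y) ^ 2) ^ 2 * F0 y
    - 102 * ((sqf y) ^ 2) ^ 2 * F1 y - 867 * (sqf y) ^ 2 * F0 y)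
  / (sqf y * ((sqf y) ^ 2) ^ 2)

def rt (y : ℝ) : ℝ :=
  -((y ^ 4 - 44 * y ^ 3 + 1206 * y ^ 2 - 44 * y + 1) / (4 * y ^ 2 * ((sqf y) ^ 2) ^ 2))

def Rd (y : ℝ) : ℝ :=
  (y ^ 6 - 61 * y ^ 5 - (1/2) * y ^ 4 * (sqf y) ^ 2 + 1954 * y ^ 4 + 11 * y ^ 3 * (sqf y) ^ 2
    - 20546 * y ^ 3 + 749 * y ^ 2 - 11 * y * (sqf y) ^ 2 - 17 * y + (1/2) * (sqf y) ^ 2)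
  / (y ^ 3 * ((sqf y) ^ 2) ^ 3)

lemma p_pos {x : ℝ} (hx : x ∈ Set.Ioo (0:ℝ) (17 - 12 * Real.sqrt 2)) :
    0 < x ^ 2 - 34 * x + 1 := by
  obtain ⟨h0, h1⟩ := hx
  have e1 : 0 < 17 - 12 * Real.sqrt 2 - x := by linarith
  have e2 : 0 < 17 + 12 * Real.sqrt 2 - x := by nlinarith [sqrt2_nonneg]
  nlinarith [mul_pos e1 e2, sqrt2_sq]

lemma sqf_pos {x : ℝ} (hx : x ∈ Set.Ioo (0:ℝ) (17 - 12 * Real.sqrt 2)) : 0 < sqf x :=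
  Real.sqrt_pos.2 (p_pos hx)

lemma sqf_sq {x : ℝ} (hx : x ∈ Set.Ioo (0:ℝ) (17 - 12 * Real.sqrt 2)) :
    (sqf x) ^ 2 = x ^ 2 - 34 * x + 1 :=
  Real.sq_sqrt (p_pos hx).le

lemma abs_lt_rho {x : ℝ} (hx : x ∈ Set.Ioo (0:ℝ) (17 - 12 * Real.sqrt 2)) :
    |x| < 17 - 12 * Real.sqrt 2 := by
  rw [abs_lt]
  exact ⟨by nlinarith [rho_pos, hx.1], hx.2⟩

lemma hpoly' (x : ℝ) : HasDerivAt (fun y : ℝ => y ^ 2 - 34 * y + 1) (2 * x - 34) x := by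
  have h := ((hasDerivAt_pow 2 x).sub ((hasDerivAt_id x).const_mul 34)).add_const 1
  refine h.congr_deriv ?_
  norm_num

lemma hsq' {x : ℝ} (hx : x ∈ Set.Ioo (0:ℝ) (17 - 12 * Real.sqrt 2)) :
    HasDerivAt sqf ((2 * x - 34) / (2 * sqf x)) x := by
  have h := (hpoly' x).sqrt (p_pos hx).ne'
  exact h

lemma hs2' {x : ℝ} (hx : x ∈ Set.Ioo (0:ℝ) (17 - 12 * Real.sqrt 2)) :
    HasDerivAt (fun y : ℝ => (sqf y) ^ 2)
      ((2:ℕ) * (sqf x) ^ 1 * ((2 * x - 34) / (2 * sqf x))) x :=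
  (hsq' hx).pow 2

lemma hs4' {x : ℝ} (hx : x ∈ Set.Ioo (0:ℝ) (17 - 12 * Real.sqrt 2)) :
    HasDerivAt (fun y : ℝ => ((sqf y) ^ 2) ^ 2)
      ((2:ℕ) * ((sqf x) ^ 2) ^ 1 * ((2:ℕ) * (sqf x) ^ 1 * ((2 * x - 34) / (2 * sqf x)))) x :=
  (hs2' hx).pow 2

lemma hXi' {x : ℝ} (hx : x ∈ Set.Ioo (0:ℝ) (17 - 12 * Real.sqrt 2)) :
    HasDerivAt (fun y : ℝ => y * sqf y * F0 y) (X1f x) x := by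
  have h := ((hasDerivAt_id x).mul (hsq' hx)).mul (hF0' (abs_lt_rho hx))
  refine h.congr_deriv ?_
  simp only [Pi.add_apply, Pi.sub_apply, Pi.mul_apply, Pi.neg_apply, Pi.div_apply, id]
  have hs := sqf_pos hx
  unfold X1f
  field_simp
  ring

lemma hX1f' {x : ℝ} (hx : x ∈ Set.Ioo (0:ℝ) (17 - 12 * Real.sqrt 2)) :
    HasDerivAt X1f (X2f x) x := by
  have hs := sqf_pos hx
  have habs := abs_lt_rho hx
  have hF0x := hF0' habs
  have hF1x := hF1' habs
  have h_a := (hasDerivAt_pow 2 x).mul hF0x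
  have h_b := (((hasDerivAt_id x).mul (hs2' hx))).mul hF1x
  have h_c := (((hasDerivAt_id x).const_mul (17:ℝ))).mul hF0x
  have h_d := (hs2' hx).mul hF0x
  have hN := ((h_a.add h_b).sub h_c).add h_d
  have h := hN.div (hsq' hx) hs.ne'
  refine h.congr_deriv ?_
  simp only [Pi.add_apply, Pi.sub_apply, Pi.mul_apply, Pi.neg_apply, Pi.div_apply, id]
  unfold X2f
  field_simp
  ring

lemma hX2f' {x : ℝ} (hx : x ∈ Set.Ioo (0:ℝ) (17 - 12 * Real.sqrt 2)) :
    HasDerivAt X2f (X3f x) x := by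
  have hs := sqf_pos hx
  have habs := abs_lt_rho hx
  have hF0x := hF0' habs
  have hF1x := hF1' habs
  have hF2x := hF2' habs
  have tA := ((hasDerivAt_pow 3 x).mul hF0x).neg
  have tB := (((hasDerivAt_pow 2 x).const_mul (2:ℝ)).mul (hs2' hx)).mul hF1x
  have tC := ((hasDerivAt_pow 2 x).const_mul (34:ℝ)).mul hF0x
  have tD := ((hasDerivAt_id x).mul (hs4' hx)).mul hF2x
  have tE := (((hasDerivAt_id x).const_mul (3:ℝ)).mul (hs2' hx)).mul hF0x
  have tF := (((hasDerivAt_id x).const_mul (34:ℝ)).mul (hs2' hx)).mul hF1x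
  have tG := ((hasDerivAt_id x).const_mul (289:ℝ)).mul hF0x
  have tH := ((hs4' hx).const_mul (2:ℝ)).mul hF1x
  have tI := ((hs2' hx).const_mul (34:ℝ)).mul hF0x
  have hN := ((((((((tA.add tB).add tC).add tD).add tE).sub tF).sub tG).add tH).sub tI)
  have hden := (hsq' hx).mul (hs2' hx)
  have hdne : sqf x * (sqf x) ^ 2 ≠ 0 := by positivity
  have h := hN.div hden hdne
  refine h.congr_deriv ?_
  simp only [Pi.add_apply, Pi.sub_apply, Pi.mul_apply, Pi.neg_apply, Pi.div_apply, id]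
  unfold X3f
  field_simp
  ring

lemma hrt' {x : ℝ} (hx : x ∈ Set.Ioo (0:ℝ) (17 - 12 * Real.sqrt 2)) :
    HasDerivAt rt (Rd x) x := by
  have hs := sqf_pos hx
  have hx0 : x ≠ 0 := hx.1.ne'
  have hNr := (((((hasDerivAt_pow 4 x).sub ((hasDerivAt_pow 3 x).const_mul 44)).add
    ((hasDerivAt_pow 2 x).const_mul 1206)).sub ((hasDerivAt_id x).const_mul 44)).add_const 1)
  have hDr := ((hasDerivAt_pow 2 x).const_mul (4:ℝ)).mul (hs4' hx)
  have hdne : 4 * x ^ 2 * ((sqf x) ^ 2) ^ 2 ≠ 0 := by positivity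
  have h := (hNr.div hDr hdne).neg
  refine h.congr_deriv ?_
  simp only [Pi.add_apply, Pi.sub_apply, Pi.mul_apply, Pi.neg_apply, Pi.div_apply, id]
  unfold Rd
  field_simp
  ring


/-- The Apéry generating series converges for `|x| < 17 − 12√2`, and
`ξ(x) = x (x² − 34x + 1)^{1/2} ∑ a_n xⁿ` is three times differentiable on
`(0, 17 − 12√2)` and solves `ξ''' = 4 r ξ' + 2 r' ξ` there. -/
theorem xi_third_order_equation :
    let a : ℕ → ℝ := fun n =>
      ∑ k ∈ Finset.range (n + 1), (n.choose k : ℝ) ^ 2 * ((n + k).choose n : ℝ) ^ 2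
    let ξ : ℝ → ℝ := fun x => x * Real.sqrt (x ^ 2 - 34 * x + 1) * ∑' n : ℕ, a n * x ^ n
    let r : ℝ → ℝ := fun x =>
      -((x ^ 4 - 44 * x ^ 3 + 1206 * x ^ 2 - 44 * x + 1) /
        (4 * x ^ 2 * (x ^ 2 - 34 * x + 1) ^ 2))
    (∀ x : ℝ, |x| < 17 - 12 * Real.sqrt 2 → Summable fun n : ℕ => a n * x ^ n) ∧
    ∀ x ∈ Set.Ioo (0 : ℝ) (17 - 12 * Real.sqrt 2),
      DifferentiableAt ℝ ξ x ∧ DifferentiableAt ℝ (deriv ξ) x ∧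
      DifferentiableAt ℝ (deriv (deriv ξ)) x ∧
      deriv (deriv (deriv ξ)) x = 4 * r x * deriv ξ x + 2 * deriv r x * ξ x := by
  intro a ξ r
  constructor
  · intro x hx
    exact master_summable 1 1 (fun n => by show |ap n| ≤ _; simpa using abs_ap_le n) hx
  · intro x hx
    have habs := abs_lt_rho hx
    have hxi : ∀ y ∈ Set.Ioo (0:ℝ) (17 - 12 * Real.sqrt 2), HasDerivAt ξ (X1f y) y :=
      fun y hy => hXi' hy
    have hD1eq : Set.EqOn (deriv ξ) X1f (Set.Ioo (0:ℝ) (17 - 12 * Real.sqrt 2)) :=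
      fun y hy => (hxi y hy).deriv
    have hEv1 : ∀ y ∈ Set.Ioo (0:ℝ) (17 - 12 * Real.sqrt 2), deriv ξ =ᶠ[nhds y] X1f :=
      fun y hy => Filter.eventuallyEq_of_mem (isOpen_Ioo.mem_nhds hy) hD1eq
    have hD2eq : Set.EqOn (deriv (deriv ξ)) X2f (Set.Ioo (0:ℝ) (17 - 12 * Real.sqrt 2)) :=
      fun y hy => ((hEv1 y hy).deriv_eq).trans (hX1f' hy).deriv
    have hEv2 : ∀ y ∈ Set.Ioo (0:ℝ) (17 - 12 * Real.sqrt 2),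
        deriv (deriv ξ) =ᶠ[nhds y] X2f :=
      fun y hy => Filter.eventuallyEq_of_mem (isOpen_Ioo.mem_nhds hy) hD2eq
    refine ⟨(hxi x hx).differentiableAt, ?_, ?_, ?_⟩
    · exact (hEv1 x hx).differentiableAt_iff.2 (hX1f' hx).differentiableAt
    · exact (hEv2 x hx).differentiableAt_iff.2 (hX2f' hx).differentiableAt
    · have h3 : deriv (deriv (deriv ξ)) x = X3f x :=
        ((hEv2 x hx).deriv_eq).trans (hX2f' hx).deriv
      have h1 : deriv ξ x = X1f x := hD1eq hx
      have hrEq : Set.EqOn r rt (Set.Ioo (0:ℝ) (17 - 12 * Real.sqrt 2)) := by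
        intro y hy
        show -((y ^ 4 - 44 * y ^ 3 + 1206 * y ^ 2 - 44 * y + 1) /
          (4 * y ^ 2 * (y ^ 2 - 34 * y + 1) ^ 2)) = rt y
        unfold rt
        rw [sqf_sq hy]
      have hr' : deriv r x = Rd x := by
        have hEvr : r =ᶠ[nhds x] rt :=
          Filter.eventuallyEq_of_mem (isOpen_Ioo.mem_nhds hx) hrEq
        rw [hEvr.deriv_eq, (hrt' hx).deriv]
      have hrval : r x = rt x := hrEq hx
      have hxiv : ξ x = x * sqf x * F0 x := rfl
      rw [h3, h1, hr', hrval, hxiv]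
      have hp := p_pos hx
      have hs := sqf_pos hx
      have hx0 : x ≠ 0 := ne_of_gt hx.1
      have hODE := ode hx0 habs
      have hpne : x ^ 2 - 34 * x + 1 ≠ 0 := hp.ne'
      have hf3 : F3 x = -((6 * x ^ 3 - 153 * x ^ 2 + 3 * x) * F2 x
          + (7 * x ^ 2 - 112 * x + 1) * F1 x + (x - 5) * F0 x)
          / (x ^ 2 * (x ^ 2 - 34 * x + 1)) := by
        rw [eq_div_iff (mul_ne_zero (pow_ne_zero 2 hx0) hpne)]
        linear_combination hODE
      have hsplitxi : x * sqf x * F0 x = x * (sqf x) ^ 2 * F0 x / sqf x := by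
        field_simp
      rw [hsplitxi]
      unfold X3f X1f rt Rd
      rw [hf3, sqf_sq hx]
      field_simp
      ring


end
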